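/- Let G = (B,ψ,A) be a quantum graph with δ-form ψ. Then the linear map (1/δ²)(1⊗m)(1⊗A⊗1)(m*⊗1) : B⊗B → B⊗B is an idempotent, and it is both left and right B-linear (with B acting on the first and last tensor legs respectively). -/
import Mathlib


open scoped TensorProduct
open TensorProduct

noncomputable section


open scoped TensorProduct
open TensorProduct

noncomputable section

variable {B : Type*} [Ring B] [StarRing B] [Algebra ℂ B] [StarModule ℂ B]
  [Module.Finite ℂ B] [Module.Free ℂ B]

/-- The multiplication map `m : B ⊗ B → B`. -/
abbrev mulMap (B : Type*) [Ring B] [Algebra ℂ B] : B ⊗[ℂ] B →ₗ[ℂ] B := LinearMap.mul' ℂ B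

/-- `ψ ⊗ ψ` as a functional on `B ⊗ B`. -/
def psi2 (ψ : B →ₗ[ℂ] ℂ) : B ⊗[ℂ] B →ₗ[ℂ] ℂ :=
  (TensorProduct.lid ℂ ℂ).toLinearMap ∘ₗ TensorProduct.map ψ ψ

/-- `ψ ⊗ id : B ⊗ B → B`. -/
def psiOne (ψ : B →ₗ[ℂ] ℂ) : B ⊗[ℂ] B →ₗ[ℂ] B :=
  (TensorProduct.lid ℂ B).toLinearMap ∘ₗ TensorProduct.map ψ LinearMap.id

/-- `ψ` is a faithful state. -/
def IsState (ψ : B →ₗ[ℂ] ℂ) : Prop :=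
  ψ 1 = 1 ∧ (∀ x : B, 0 ≤ (ψ (star x * x)).re ∧ (ψ (star x * x)).im = 0) ∧
    ∀ x : B, ψ (star x * x) = 0 → x = 0

/-- `mstar` is the adjoint of multiplication w.r.t. the GNS inner products of `ψ`:
`⟪y ⊗ z, m*(x)⟫_{ψ⊗ψ} = ⟪y * z, x⟫_ψ`. -/
def IsAdjointMul (ψ : B →ₗ[ℂ] ℂ) (mstar : B →ₗ[ℂ] B ⊗[ℂ] B) : Prop :=
  ∀ x y z : B, psi2 ψ ((star y ⊗ₜ[ℂ] star z) * mstar x) = ψ (star (y * z) * x)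

/-- `ψ` is a `δ`-form: `m m* = δ² id`. -/
def IsDeltaForm (mstar : B →ₗ[ℂ] B ⊗[ℂ] B) (δ : ℝ) : Prop :=
  ∀ x : B, mulMap B (mstar x) = ((δ : ℂ)^2) • x

/-- `A` is a quantum adjacency matrix: `m (A ⊗ A) m* = δ² A`. -/
def IsQAdj (mstar : B →ₗ[ℂ] B ⊗[ℂ] B) (δ : ℝ) (A : B →ₗ[ℂ] B) : Prop :=
  ∀ x : B, mulMap B (TensorProduct.map A A (mstar x)) = ((δ : ℂ)^2) • A x

/-- The quantum edge indicator `ε = (1/δ²)(1 ⊗ A) m*(1)`. -/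
def edgeInd (mstar : B →ₗ[ℂ] B ⊗[ℂ] B) (δ : ℝ) (A : B →ₗ[ℂ] B) : B ⊗[ℂ] B :=
  (((δ : ℂ)^2)⁻¹) • (LinearMap.lTensor B A) (mstar 1)

/-- The `#`-multiplication on `B ⊗ B`: `(a⊗b)#(c⊗d) = (ac)⊗(db)` (i.e. `B ⊗ Bᵒᵖ`). -/
def hashMul (ξ η : B ⊗[ℂ] B) : B ⊗[ℂ] B :=
  (TensorProduct.congr (LinearEquiv.refl ℂ B) (MulOpposite.opLinearEquiv ℂ (M := B))).symm
    ((TensorProduct.congr (LinearEquiv.refl ℂ B) (MulOpposite.opLinearEquiv ℂ (M := B))) ξ *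
      (TensorProduct.congr (LinearEquiv.refl ℂ B) (MulOpposite.opLinearEquiv ℂ (M := B))) η)

/-- The (conjugate-linear) star operation on `B ⊗ B`, `star (a ⊗ b) = star a ⊗ star b`,
defined via a choice of basis. -/
def starT (ξ : B ⊗[ℂ] B) : B ⊗[ℂ] B :=
  ∑ p : Module.Free.ChooseBasisIndex ℂ B × Module.Free.ChooseBasisIndex ℂ B,
    (starRingEnd ℂ)
      (((Module.Free.chooseBasis ℂ B).tensorProduct (Module.Free.chooseBasis ℂ B)).repr ξ p) •
      (star ((Module.Free.chooseBasis ℂ B) p.1) ⊗ₜ[ℂ] star ((Module.Free.chooseBasis ℂ B) p.2))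

/-- The `B`-valued inner product on `B ⊗ B`: `⟨a⊗b, c⊗d⟩_B = ψ(a*c) b* d`. -/
def bip (ψ : B →ₗ[ℂ] ℂ) (ξ η : B ⊗[ℂ] B) : B := psiOne ψ (starT ξ * η)

/-- Positivity in a star ring. -/
def IsPosEl {R : Type*} [Ring R] [StarRing R] (x : R) : Prop := ∃ y, x = star y * y

/-- Complete positivity of a linear map on `B`. -/
def IsCP (A : B →ₗ[ℂ] B) : Prop :=
  ∀ (n : ℕ) (M : Matrix (Fin n) (Fin n) B), IsPosEl M → IsPosEl (M.map A)

/-- The map `A_ξ : x ↦ δ² (ψ ⊗ 1)(x · ξ)`. -/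
def Axi (ψ : B →ₗ[ℂ] ℂ) (δ : ℝ) (ξ : B ⊗[ℂ] B) : B →ₗ[ℂ] B :=
  ((δ : ℂ)^2) • ((psiOne ψ) ∘ₗ ((LinearMap.mul ℂ (B ⊗[ℂ] B)).flip ξ) ∘ₗ
    (Algebra.TensorProduct.includeLeft : B →ₐ[ℂ] B ⊗[ℂ] B).toLinearMap)

/-- The quantum edge correspondence `E_G = B · ε_G · B` as a subspace of `B ⊗ B`. -/
def EGspan (mstar : B →ₗ[ℂ] B ⊗[ℂ] B) (δ : ℝ) (A : B →ₗ[ℂ] B) : Submodule ℂ (B ⊗[ℂ] B) :=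
  Submodule.span ℂ
    {z : B ⊗[ℂ] B | ∃ x y : B, z = (x ⊗ₜ[ℂ] (1 : B)) * edgeInd mstar δ A * ((1 : B) ⊗ₜ[ℂ] y)}


/-- The map `(1/δ²)(1 ⊗ m)(1 ⊗ A ⊗ 1)(m* ⊗ 1) : B ⊗ B → B ⊗ B`. -/
def Pmap {B : Type*} [Ring B] [StarRing B] [Algebra ℂ B] [StarModule ℂ B]
    [Module.Finite ℂ B] [Module.Free ℂ B]
    (mstar : B →ₗ[ℂ] B ⊗[ℂ] B) (δ : ℝ) (A : B →ₗ[ℂ] B) :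
    B ⊗[ℂ] B →ₗ[ℂ] B ⊗[ℂ] B :=
  (((δ : ℂ)^2)⁻¹) •
    ((LinearMap.lTensor B (mulMap B)) ∘ₗ (LinearMap.lTensor B (LinearMap.rTensor B A)) ∘ₗ
      (TensorProduct.assoc ℂ B B B).toLinearMap ∘ₗ (LinearMap.rTensor B mstar))

set_option linter.unusedSectionVars false

lemma psi2_tmul (ψ : B →ₗ[ℂ] ℂ) (a b : B) : psi2 ψ (a ⊗ₜ[ℂ] b) = ψ a * ψ b := by
  simp [psi2, smul_eq_mul]

lemma pair_mstar (ψ : B →ₗ[ℂ] ℂ) (mstar : B →ₗ[ℂ] B ⊗[ℂ] B)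
    (hadj : IsAdjointMul ψ mstar) (x y z : B) :
    psi2 ψ ((y ⊗ₜ[ℂ] z) * mstar x) = ψ (z * y * x) := by
  have := hadj x (star y) (star z)
  simpa [star_mul] using this

/-- `x ↦ ψ(x * ·)` as a map to the dual. -/
def Lmap (ψ : B →ₗ[ℂ] ℂ) : B →ₗ[ℂ] Module.Dual ℂ B :=
  (LinearMap.mul ℂ B).compr₂ ψ

@[simp] lemma Lmap_apply (ψ : B →ₗ[ℂ] ℂ) (x y : B) : Lmap ψ x y = ψ (x * y) := rfl

lemma Lmap_surj (ψ : B →ₗ[ℂ] ℂ) (hψ : IsState ψ) : Function.Surjective (Lmap ψ) := by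
  have hinj : Function.Injective (Lmap ψ) := by
    rw [injective_iff_map_eq_zero]
    intro x hx
    have h0 : ψ (x * star x) = 0 := by
      have := congrArg (fun f => f (star x)) hx
      simpa using this
    have : star x = 0 := hψ.2.2 (star x) (by simpa using h0)
    simpa using congrArg star this
  exact (LinearMap.injective_iff_surjective_of_finrank_eq_finrank
    (Subspace.dual_finrank_eq (V := B)).symm).mp hinj

set_option linter.unusedSectionVars false

lemma nondeg2 (ψ : B →ₗ[ℂ] ℂ) (hψ : IsState ψ) (η : B ⊗[ℂ] B)
    (hη : ∀ y z : B, psi2 ψ ((y ⊗ₜ[ℂ] z) * η) = 0) : η = 0 := by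
  rw [← Module.forall_dual_apply_eq_zero_iff ℂ η]
  intro f
  -- the map Ξ : B ⊗ B → Dual (B ⊗ B)
  set Ξ : B ⊗[ℂ] B →ₗ[ℂ] Module.Dual ℂ (B ⊗[ℂ] B) :=
    (TensorProduct.dualDistribEquiv ℂ B B).toLinearMap ∘ₗ
      (TensorProduct.map (Lmap ψ) (Lmap ψ)) with hΞ
  have hsurj : Function.Surjective Ξ := by
    rw [hΞ]
    rw [LinearMap.coe_comp]
    exact Function.Surjective.comp (LinearEquiv.surjective _)
      (TensorProduct.map_surjective (Lmap_surj ψ hψ) (Lmap_surj ψ hψ))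
  obtain ⟨ξ, rfl⟩ := hsurj f
  have key : ∀ y z : B, Ξ (y ⊗ₜ[ℂ] z) η = psi2 ψ ((y ⊗ₜ[ℂ] z) * η) := by
    intro y z
    have : ∀ ζ : B ⊗[ℂ] B, Ξ (y ⊗ₜ[ℂ] z) ζ = psi2 ψ ((y ⊗ₜ[ℂ] z) * ζ) := by
      intro ζ
      induction ζ using TensorProduct.induction_on with
      | zero => simp
      | tmul c d =>
        simp [hΞ, TensorProduct.dualDistribEquiv, Algebra.TensorProduct.tmul_mul_tmul,
          psi2_tmul, TensorProduct.dualDistribEquivOfBasis_apply_apply]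
      | add u v hu hv => simp [mul_add, hu, hv]
    exact this η
  induction ξ using TensorProduct.induction_on with
  | zero => simp
  | tmul y z => rw [key y z]; exact hη y z
  | add u v hu hv => simp [hu, hv]

lemma mstar_eq (ψ : B →ₗ[ℂ] ℂ) (hψ : IsState ψ) (mstar : B →ₗ[ℂ] B ⊗[ℂ] B)
    (hadj : IsAdjointMul ψ mstar) (x : B) :
    mstar x = (x ⊗ₜ[ℂ] (1 : B)) * mstar 1 := by
  rw [← sub_eq_zero]
  apply nondeg2 ψ hψ
  intro y z
  rw [mul_sub, map_sub, pair_mstar ψ mstar hadj]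
  have h2 : (y ⊗ₜ[ℂ] z) * ((x ⊗ₜ[ℂ] (1:B)) * mstar 1) = ((y * x) ⊗ₜ[ℂ] z) * mstar 1 := by
    rw [← mul_assoc, Algebra.TensorProduct.tmul_mul_tmul, mul_one]
  rw [h2, pair_mstar ψ mstar hadj]
  rw [mul_one, mul_assoc, sub_self]

lemma comm_e (ψ : B →ₗ[ℂ] ℂ) (hψ : IsState ψ) (mstar : B →ₗ[ℂ] B ⊗[ℂ] B)
    (hadj : IsAdjointMul ψ mstar) (x : B) :
    (x ⊗ₜ[ℂ] (1 : B)) * mstar 1 = mstar 1 * ((1 : B) ⊗ₜ[ℂ] x) := by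
  rw [← sub_eq_zero]
  apply nondeg2 ψ hψ
  intro y z
  rw [mul_sub, map_sub, sub_eq_zero]
  have h1 : (y ⊗ₜ[ℂ] z) * ((x ⊗ₜ[ℂ] (1:B)) * mstar 1) = ((y * x) ⊗ₜ[ℂ] z) * mstar 1 := by
    rw [← mul_assoc, Algebra.TensorProduct.tmul_mul_tmul, mul_one]
  rw [h1, pair_mstar ψ mstar hadj, mul_one]
  -- RHS: find w with ψ (w * d) = ψ (z * d * x) for all d
  obtain ⟨w, hw⟩ := Lmap_surj ψ hψ
    (ψ ∘ₗ (LinearMap.mulRight ℂ x) ∘ₗ (LinearMap.mulLeft ℂ z))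
  have hw' : ∀ d : B, ψ (w * d) = ψ (z * d * x) := by
    intro d
    have := congrArg (fun f => f d) hw
    simpa using this
  have key : ∀ ζ : B ⊗[ℂ] B,
      psi2 ψ ((y ⊗ₜ[ℂ] z) * (ζ * ((1:B) ⊗ₜ[ℂ] x))) = psi2 ψ ((y ⊗ₜ[ℂ] w) * ζ) := by
    intro ζ
    induction ζ using TensorProduct.induction_on with
    | zero => simp
    | tmul c d =>
      rw [Algebra.TensorProduct.tmul_mul_tmul, mul_one, Algebra.TensorProduct.tmul_mul_tmul,
        Algebra.TensorProduct.tmul_mul_tmul, psi2_tmul, psi2_tmul, hw' d, mul_assoc]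
    | add u v hu hv => rw [add_mul, mul_add, map_add, hu, hv, mul_add, map_add]
  rw [key (mstar 1), pair_mstar ψ mstar hadj, mul_one, ← mul_assoc, hw' y]

lemma Pmap_tmul (ψ : B →ₗ[ℂ] ℂ) (hψ : IsState ψ) (mstar : B →ₗ[ℂ] B ⊗[ℂ] B)
    (hadj : IsAdjointMul ψ mstar) (δ : ℝ) (A : B →ₗ[ℂ] B)
    (s : Finset (B × B)) (hs : mstar 1 = ∑ p ∈ s, p.1 ⊗ₜ[ℂ] p.2) (a b : B) :
    Pmap mstar δ A (a ⊗ₜ[ℂ] b)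
      = (((δ:ℂ)^2)⁻¹) • ∑ p ∈ s, (a * p.1) ⊗ₜ[ℂ] (A p.2 * b) := by
  have hma : mstar a = ∑ p ∈ s, (a * p.1) ⊗ₜ[ℂ] p.2 := by
    rw [mstar_eq ψ hψ mstar hadj a, hs, Finset.mul_sum]
    simp [Algebra.TensorProduct.tmul_mul_tmul]
  simp only [Pmap, LinearMap.smul_apply, LinearMap.comp_apply, LinearMap.rTensor_tmul, hma,
    TensorProduct.sum_tmul, map_sum, LinearEquiv.coe_coe, TensorProduct.assoc_tmul,
    LinearMap.lTensor_tmul, LinearMap.rTensor_tmul, LinearMap.mul'_apply]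

/-- `(1/δ²)(1⊗m)(1⊗A⊗1)(m*⊗1)` is an idempotent `B`-bimodule map on `B ⊗ B`. -/
theorem stmt_7 {B : Type*} [Ring B] [StarRing B] [Algebra ℂ B] [StarModule ℂ B]
    [Module.Finite ℂ B] [Module.Free ℂ B]
    (ψ : B →ₗ[ℂ] ℂ) (hψ : IsState ψ)
    (mstar : B →ₗ[ℂ] B ⊗[ℂ] B) (hadj : IsAdjointMul ψ mstar)
    (δ : ℝ) (hδ : 0 < δ) (hdelta : IsDeltaForm mstar δ)
    (A : B →ₗ[ℂ] B) (hA : IsQAdj mstar δ A) :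
    (∀ ξ : B ⊗[ℂ] B, Pmap mstar δ A (Pmap mstar δ A ξ) = Pmap mstar δ A ξ) ∧
    (∀ (x : B) (ξ : B ⊗[ℂ] B),
      Pmap mstar δ A ((x ⊗ₜ[ℂ] (1 : B)) * ξ) = (x ⊗ₜ[ℂ] (1 : B)) * Pmap mstar δ A ξ) ∧
    (∀ (y : B) (ξ : B ⊗[ℂ] B),
      Pmap mstar δ A (ξ * ((1 : B) ⊗ₜ[ℂ] y)) = Pmap mstar δ A ξ * ((1 : B) ⊗ₜ[ℂ] y)) := by
  obtain ⟨s, hs⟩ := TensorProduct.exists_finset (mstar 1)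
  have hc : ((δ:ℂ)^2) ≠ 0 := pow_ne_zero _ (by exact_mod_cast hδ.ne')
  set c : ℂ := (δ:ℂ)^2 with hcdef
  have hPt := Pmap_tmul ψ hψ mstar hadj δ A s hs
  refine ⟨?_, ?_, ?_⟩
  · -- idempotency
    intro ξ
    induction ξ using TensorProduct.induction_on with
    | zero => simp
    | add u v hu hv => rw [map_add, map_add, hu, hv]
    | tmul a b =>
      rw [hPt a b, map_smul, map_sum]
      have step : ∀ p ∈ s, Pmap mstar δ A ((a * p.1) ⊗ₜ[ℂ] (A p.2 * b))
          = c⁻¹ • ∑ q ∈ s, (a * q.1) ⊗ₜ[ℂ] (A (q.2 * p.1) * (A p.2 * b)) := by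
        intro p _
        rw [hPt (a * p.1) (A p.2 * b)]
        congr 1
        have h := comm_e ψ hψ mstar hadj p.1
        rw [hs] at h
        have h2 := congrArg (TensorProduct.map (LinearMap.mulLeft ℂ a)
          ((LinearMap.mulRight ℂ (A p.2 * b)) ∘ₗ A)) h
        simpa [Finset.mul_sum, Finset.sum_mul, Algebra.TensorProduct.tmul_mul_tmul,
          mul_assoc] using h2
      rw [Finset.sum_congr rfl step, ← Finset.smul_sum, Finset.sum_comm]
      have step2 : ∀ q ∈ s, (∑ p ∈ s, (a * q.1) ⊗ₜ[ℂ] (A (q.2 * p.1) * (A p.2 * b)))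
          = c • ((a * q.1) ⊗ₜ[ℂ] (A q.2 * b)) := by
        intro q _
        have inner : ∑ p ∈ s, A (q.2 * p.1) * A p.2 = c • A q.2 := by
          calc ∑ p ∈ s, A (q.2 * p.1) * A p.2
              = mulMap B (TensorProduct.map A A (mstar q.2)) := by
                rw [mstar_eq ψ hψ mstar hadj q.2, hs, Finset.mul_sum, map_sum, map_sum]
                exact (Finset.sum_congr rfl fun p _ => by
                  rw [Algebra.TensorProduct.tmul_mul_tmul, one_mul, TensorProduct.map_tmul,
                    LinearMap.mul'_apply]).symm
            _ = c • A q.2 := hA q.2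
        calc ∑ p ∈ s, (a * q.1) ⊗ₜ[ℂ] (A (q.2 * p.1) * (A p.2 * b))
            = (a * q.1) ⊗ₜ[ℂ] ((∑ p ∈ s, A (q.2 * p.1) * A p.2) * b) := by
              rw [Finset.sum_mul, TensorProduct.tmul_sum]
              exact Finset.sum_congr rfl fun p _ => by rw [mul_assoc]
          _ = c • ((a * q.1) ⊗ₜ[ℂ] (A q.2 * b)) := by
              rw [inner, smul_mul_assoc, TensorProduct.tmul_smul]
      rw [Finset.sum_congr rfl step2, ← Finset.smul_sum, smul_smul, smul_smul,
        mul_assoc, inv_mul_cancel₀ hc, mul_one]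
  · -- left linearity
    intro x ξ
    induction ξ using TensorProduct.induction_on with
    | zero => simp
    | add u v hu hv => rw [mul_add, map_add, hu, hv, map_add, mul_add]
    | tmul a b =>
      rw [Algebra.TensorProduct.tmul_mul_tmul, one_mul, hPt (x * a) b, hPt a b,
        mul_smul_comm, Finset.mul_sum]
      congr 1
      exact Finset.sum_congr rfl fun p _ => by
        rw [Algebra.TensorProduct.tmul_mul_tmul, one_mul, mul_assoc]
  · -- right linearity
    intro y ξ
    induction ξ using TensorProduct.induction_on with
    | zero => simp
    | add u v hu hv => rw [add_mul, map_add, hu, hv, map_add, add_mul]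
    | tmul a b =>
      rw [Algebra.TensorProduct.tmul_mul_tmul, mul_one, hPt a (b * y), hPt a b,
        smul_mul_assoc, Finset.sum_mul]
      congr 1
      exact Finset.sum_congr rfl fun p _ => by
        rw [Algebra.TensorProduct.tmul_mul_tmul, mul_one, mul_assoc]


end
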